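/- arXiv:2208.08539 — 2 statements merged into one kernel-verified Lean document; each statement's English description precedes it below -/
import Mathlib

section
/- Let V_m denote the number of occupied tables after m customers in the two-parameter Chinese restaurant process with parameters 0 < α < 1 and θ > -α. Then E[V_m] = (Γ(θ+1)/(α Γ(θ+α))) · (Γ(m+θ+α)/Γ(m+θ)) - θ/α, and consequently E[V_m] / m^α → Γ(θ+1)/(α Γ(θ+α)) as m → ∞. -/
open Filter Real

lemma wendel_upper {α x : ℝ} (hα : 0 < α) (hα1 : α < 1) (hx : 0 < x) :
    Real.Gamma (x + α) ≤ Real.Gamma x * x ^ α := by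
  have h := Real.Gamma_mul_add_mul_le_rpow_Gamma_mul_rpow_Gamma (s := x) (t := x + 1)
    (a := 1 - α) (b := α) hx (by linarith) (by linarith) hα (by ring)
  have h1 : (1 - α) * x + α * (x + 1) = x + α := by ring
  rw [h1, Real.Gamma_add_one hx.ne'] at h
  have hG : 0 < Real.Gamma x := Real.Gamma_pos_of_pos hx
  calc Real.Gamma (x + α) ≤ Real.Gamma x ^ (1 - α) * (x * Real.Gamma x) ^ α := h
    _ = Real.Gamma x * x ^ α := by
        rw [Real.mul_rpow hx.le hG.le, mul_comm (x ^ α), ← mul_assoc,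
          ← Real.rpow_add hG, sub_add_cancel, Real.rpow_one]

lemma wendel_lower {α x : ℝ} (hα : 0 < α) (hα1 : α < 1) (hx : 0 < x) :
    x * Real.Gamma x ≤ Real.Gamma (x + α) * (x + α) ^ (1 - α) := by
  have hxα : 0 < x + α := by linarith
  have h := Real.Gamma_mul_add_mul_le_rpow_Gamma_mul_rpow_Gamma (s := x + α) (t := x + α + 1)
    (a := α) (b := 1 - α) hxα (by linarith) hα (by linarith) (by ring)
  have h1 : α * (x + α) + (1 - α) * (x + α + 1) = x + 1 := by ring
  rw [h1, Real.Gamma_add_one hx.ne', Real.Gamma_add_one hxα.ne'] at h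
  have hG : 0 < Real.Gamma (x + α) := Real.Gamma_pos_of_pos hxα
  calc x * Real.Gamma x ≤ Real.Gamma (x + α) ^ α * ((x + α) * Real.Gamma (x + α)) ^ (1 - α) := h
    _ = Real.Gamma (x + α) * (x + α) ^ (1 - α) := by
        rw [Real.mul_rpow hxα.le hG.le, mul_comm ((x + α) ^ (1 - α)), ← mul_assoc,
          ← Real.rpow_add hG, add_sub_cancel, Real.rpow_one]

lemma tendsto_add_div_self (c : ℝ) :
    Tendsto (fun m : ℕ => ((m : ℝ) + c) / m) atTop (nhds 1) := by
  have h0 : Tendsto (fun m : ℕ => c / (m : ℝ)) atTop (nhds 0) :=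
    Tendsto.div_atTop tendsto_const_nhds tendsto_natCast_atTop_atTop
  have h1 : Tendsto (fun m : ℕ => 1 + c / (m : ℝ)) atTop (nhds 1) := by
    simpa using tendsto_const_nhds.add h0
  refine h1.congr' ?_
  filter_upwards [eventually_ge_atTop 1] with m hm
  have hm0 : (m : ℝ) ≠ 0 := by positivity
  field_simp

/-- Ratio asymptotics: `Γ(m+θ+α)/Γ(m+θ) / m^α → 1`. -/
lemma gamma_ratio_tendsto {α θ : ℝ} (hα : 0 < α) (hα1 : α < 1) (hθ : -α < θ) :
    Tendsto (fun m : ℕ =>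
      Real.Gamma ((m : ℝ) + θ + α) / Real.Gamma ((m : ℝ) + θ) / (m : ℝ) ^ α)
      atTop (nhds 1) := by
  have hlow : Tendsto (fun m : ℕ =>
      (((m : ℝ) + θ) / m) * (((m : ℝ) / ((m : ℝ) + θ + α)) ^ (1 - α))) atTop (nhds 1) := by
    have hA := tendsto_add_div_self θ
    have hB : Tendsto (fun m : ℕ => (m : ℝ) / ((m : ℝ) + θ + α)) atTop (nhds 1) := by
      have := (tendsto_add_div_self (θ + α)).inv₀ one_ne_zero
      simp only [inv_div, inv_one] at this
      refine this.congr fun m => by ring_nf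
    have hB' : Tendsto (fun m : ℕ => ((m : ℝ) / ((m : ℝ) + θ + α)) ^ (1 - α)) atTop (nhds 1) := by
      have := hB.rpow_const (p := 1 - α) (Or.inl one_ne_zero)
      simpa using this
    simpa using hA.mul hB'
  have hup : Tendsto (fun m : ℕ => (((m : ℝ) + θ) / m) ^ α) atTop (nhds 1) := by
    have := (tendsto_add_div_self θ).rpow_const (p := α) (Or.inl one_ne_zero)
    simpa using this
  refine tendsto_of_tendsto_of_tendsto_of_le_of_le' hlow hup ?_ ?_
  · filter_upwards [eventually_ge_atTop 1] with m hm
    have hm1 : (1 : ℝ) ≤ (m : ℝ) := by exact_mod_cast hm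
    have hm0 : (0 : ℝ) < m := by linarith
    set x : ℝ := (m : ℝ) + θ with hxdef
    have hx : 0 < x := by simp only [hxdef]; linarith
    have hxα : 0 < x + α := by linarith
    have hG : 0 < Real.Gamma x := Real.Gamma_pos_of_pos hx
    have hGα : 0 < Real.Gamma (x + α) := Real.Gamma_pos_of_pos hxα
    have hW := wendel_lower hα hα1 hx
    -- ratio ≥ x / (x+α)^(1-α)
    have hr : x / (x + α) ^ (1 - α) ≤ Real.Gamma (x + α) / Real.Gamma x := by
      rw [div_le_div_iff₀ (by positivity) hG]
      exact hW
    have hxa' : (m : ℝ) + θ + α = x + α := by ring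
    rw [hxa']
    have hlhs : x / (m : ℝ) * ((m : ℝ) / (x + α)) ^ (1 - α)
        = x / (x + α) ^ (1 - α) / (m : ℝ) ^ α := by
      have h3 : (m : ℝ) ≠ 0 := hm0.ne'
      rw [Real.div_rpow hm0.le hxα.le, Real.rpow_sub hm0, Real.rpow_one, div_div,
        div_mul_div_comm, mul_comm x (m : ℝ), mul_div_mul_left _ _ h3, div_div,
        mul_comm ((x + α) ^ (1 - α))]
    rw [hlhs]
    exact div_le_div_of_nonneg_right hr (by positivity)
  · filter_upwards [eventually_ge_atTop 1] with m hm
    have hm1 : (1 : ℝ) ≤ (m : ℝ) := by exact_mod_cast hm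
    have hm0 : (0 : ℝ) < m := by linarith
    set x : ℝ := (m : ℝ) + θ with hxdef
    have hx : 0 < x := by simp only [hxdef]; linarith
    have hG : 0 < Real.Gamma x := Real.Gamma_pos_of_pos hx
    have hW := wendel_upper hα hα1 hx
    have hr : Real.Gamma (x + α) / Real.Gamma x ≤ x ^ α := by
      rw [div_le_iff₀ hG]; linarith [hW, mul_comm (Real.Gamma x) (x ^ α)]
    have hxa' : (m : ℝ) + θ + α = x + α := by ring
    rw [hxa']
    calc Real.Gamma (x + α) / Real.Gamma x / (m : ℝ) ^ α
        ≤ x ^ α / (m : ℝ) ^ α := div_le_div_of_nonneg_right hr (by positivity)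
      _ = (x / (m : ℝ)) ^ α := (Real.div_rpow hx.le hm0.le α).symm

/-- In the two-parameter CRP, the expected number of occupied tables satisfies the
recursion `E[V_{m+1}] = E[V_m] + (θ + α E[V_m])/(m + θ)` with `E[V_1] = 1`; the theorem
gives the closed form and the `m^α` asymptotics. -/
theorem crp_expected_tables (α θ : ℝ) (hα : 0 < α) (hα1 : α < 1) (hθ : -α < θ)
    (V : ℕ → ℝ) (hV1 : V 1 = 1)
    (hrec : ∀ m : ℕ, 1 ≤ m → V (m + 1) = V m + (θ + α * V m) / ((m : ℝ) + θ)) :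
    (∀ m : ℕ, 1 ≤ m →
        V m = Real.Gamma (θ + 1) / (α * Real.Gamma (θ + α)) *
            (Real.Gamma ((m : ℝ) + θ + α) / Real.Gamma ((m : ℝ) + θ)) - θ / α) ∧
    Tendsto (fun m : ℕ => V m / (m : ℝ) ^ α) atTop
      (nhds (Real.Gamma (θ + 1) / (α * Real.Gamma (θ + α)))) := by
  have hθα : 0 < θ + α := by linarith
  have hθ1 : 0 < θ + 1 := by linarith
  have hGθα : 0 < Real.Gamma (θ + α) := Real.Gamma_pos_of_pos hθα
  have hGθ1 : 0 < Real.Gamma (θ + 1) := Real.Gamma_pos_of_pos hθ1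
  set C : ℝ := Real.Gamma (θ + 1) / (α * Real.Gamma (θ + α)) with hC
  have hclosed : ∀ m : ℕ, 1 ≤ m →
      V m = C * (Real.Gamma ((m : ℝ) + θ + α) / Real.Gamma ((m : ℝ) + θ)) - θ / α := by
    intro m hm
    induction m, hm using Nat.le_induction with
    | base =>
      have h1 : ((1 : ℕ) : ℝ) + θ + α = (θ + α) + 1 := by push_cast; ring
      have h2 : ((1 : ℕ) : ℝ) + θ = θ + 1 := by push_cast; ring
      rw [hV1, h1, h2, Real.Gamma_add_one hθα.ne']
      rw [hC]
      field_simp [hC]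
      ring
    | succ m hm ih =>
      have hmθ : 0 < (m : ℝ) + θ := by
        have : (1 : ℝ) ≤ m := by exact_mod_cast hm
        linarith
      have hGm : 0 < Real.Gamma ((m : ℝ) + θ) := Real.Gamma_pos_of_pos hmθ
      have h1 : ((m + 1 : ℕ) : ℝ) + θ + α = ((m : ℝ) + θ + α) + 1 := by push_cast; ring
      have h2 : ((m + 1 : ℕ) : ℝ) + θ = ((m : ℝ) + θ) + 1 := by push_cast; ring
      rw [hrec m hm, ih, h1, h2, Real.Gamma_add_one (by positivity),
        Real.Gamma_add_one hmθ.ne']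
      field_simp
      ring
  refine ⟨hclosed, ?_⟩
  have hratio := gamma_ratio_tendsto hα hα1 hθ
  have hinv : Tendsto (fun m : ℕ => (θ / α) / (m : ℝ) ^ α) atTop (nhds 0) :=
    Tendsto.div_atTop tendsto_const_nhds ((tendsto_rpow_atTop hα).comp tendsto_natCast_atTop_atTop)
  have hmain : Tendsto (fun m : ℕ =>
      C * (Real.Gamma ((m : ℝ) + θ + α) / Real.Gamma ((m : ℝ) + θ) / (m : ℝ) ^ α)
        - (θ / α) / (m : ℝ) ^ α) atTop (nhds C) := by
    simpa using (tendsto_const_nhds.mul hratio).sub hinv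
  refine hmain.congr' ?_
  filter_upwards [eventually_ge_atTop 1] with m hm
  rw [hclosed m hm, sub_div, mul_div_assoc]
end

section
/- For 0 < α < 1, the sequence p(k) = α Γ(k-α)/(Γ(1-α) Γ(k+1)), k ≥ 1, is a probability distribution: Σ_{k=1}^∞ p(k) = 1. -/
open Filter Topology

/-- `p(k) = α Γ(k-α)/(Γ(1-α) Γ(k+1))`, `k ≥ 1`, sums to one (written with `k+1` ranging
over `k : ℕ`). -/
theorem crp_degree_distribution_sums_to_one (α : ℝ) (hα : 0 < α) (hα1 : α < 1) :
    ∑' k : ℕ,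
        α * Real.Gamma (((k : ℝ) + 1) - α) /
          (Real.Gamma (1 - α) * Real.Gamma (((k : ℝ) + 1) + 1)) = 1 := by
  set c := Real.Gamma (1 - α) with hc
  have hcpos : 0 < c := Real.Gamma_pos_of_pos (by linarith)
  set b : ℕ → ℝ := fun n => Real.Gamma ((n : ℝ) + 1 - α) / (c * Real.Gamma ((n : ℝ) + 1))
    with hb
  set f : ℕ → ℝ := fun k => α * Real.Gamma (((k : ℝ) + 1) - α) /
      (c * Real.Gamma (((k : ℝ) + 1) + 1)) with hf
  have hxpos : ∀ n : ℕ, (0:ℝ) < (n : ℝ) + 1 - α := fun n => by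
    have : (0:ℝ) ≤ n := Nat.cast_nonneg n
    linarith
  have hΓxpos : ∀ n : ℕ, 0 < Real.Gamma ((n:ℝ) + 1 - α) := fun n =>
    Real.Gamma_pos_of_pos (hxpos n)
  have hΓ1pos : ∀ n : ℕ, 0 < Real.Gamma ((n:ℝ) + 1) := fun n =>
    Real.Gamma_pos_of_pos (by positivity)
  have hbpos : ∀ n, 0 < b n := fun n =>
    div_pos (hΓxpos n) (mul_pos hcpos (hΓ1pos n))
  have h2 : ∀ k : ℕ, Real.Gamma (((k:ℝ)+1) + 1) = ((k:ℝ)+1) * Real.Gamma ((k:ℝ)+1) :=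
    fun k => Real.Gamma_add_one (by positivity)
  have key : ∀ k : ℕ, f k = b k - b (k + 1) := by
    intro k
    have h1 : Real.Gamma ((k:ℝ)+1+1-α) = ((k:ℝ)+1-α) * Real.Gamma ((k:ℝ)+1-α) := by
      rw [show (k:ℝ)+1+1-α = ((k:ℝ)+1-α)+1 by ring,
        Real.Gamma_add_one (ne_of_gt (hxpos k))]
    simp only [hf, hb]
    push_cast
    rw [h1, h2 k]
    have hk1 : ((k:ℝ)+1) ≠ 0 := by positivity
    have hΓ := (hΓ1pos k).ne'
    field_simp
    ring
  have hfb : ∀ k : ℕ, f k = (α / ((k:ℝ)+1)) * b k := by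
    intro k
    simp only [hf, hb]
    rw [h2 k]
    have hk1 : ((k:ℝ)+1) ≠ 0 := by positivity
    have hΓ := (hΓ1pos k).ne'
    field_simp
  have hfpos : ∀ k, 0 < f k := fun k => by
    rw [hfb k]
    exact mul_pos (div_pos hα (by positivity)) (hbpos k)
  have hanti : Antitone b := antitone_nat_of_succ_le fun n => by
    have := key n
    have := hfpos n
    linarith
  have hbdd : BddBelow (Set.range b) := ⟨0, by rintro x ⟨n, rfl⟩; exact (hbpos n).le⟩
  set L := ⨅ n, b n with hL
  have hlim : Tendsto b atTop (𝓝 L) := tendsto_atTop_ciInf hanti hbdd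
  have hLnonneg : 0 ≤ L := le_ciInf fun n => (hbpos n).le
  have hb0 : b 0 = 1 := by
    simp only [hb]
    norm_num [Real.Gamma_one]
    field_simp
    exact hc.symm
  have hsum_partial : ∀ n, ∑ i ∈ Finset.range n, f i = b 0 - b n := by
    intro n
    simp only [key]
    exact Finset.sum_range_sub' b n
  have htend : Tendsto (fun n => ∑ i ∈ Finset.range n, f i) atTop (𝓝 (1 - L)) := by
    simp only [hsum_partial, hb0]
    exact tendsto_const_nhds.sub hlim
  have hhas : HasSum f (1 - L) :=
    (hasSum_iff_tendsto_nat_of_nonneg (fun i => (hfpos i).le) _).mpr htend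
  have hL0 : L = 0 := by
    by_contra h
    have hLpos : 0 < L := lt_of_le_of_ne hLnonneg (Ne.symm h)
    have hle : ∀ k : ℕ, α * L / ((k:ℝ)+1) ≤ f k := by
      intro k
      rw [hfb k]
      have hbk : L ≤ b k := ciInf_le hbdd k
      calc α * L / ((k:ℝ)+1) = (α/((k:ℝ)+1)) * L := by ring
        _ ≤ (α/((k:ℝ)+1)) * b k := mul_le_mul_of_nonneg_left hbk (by positivity)
    have hsummg : Summable (fun k : ℕ => α * L / ((k:ℝ)+1)) :=
      Summable.of_nonneg_of_le (fun k => by positivity) hle hhas.summable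
    have hsummg' : Summable (fun k : ℕ => (α * L) * (((k:ℝ)+1))⁻¹) := by
      simpa [div_eq_mul_inv] using hsummg
    have hsummg'' : Summable (fun k : ℕ => (((k:ℝ)+1))⁻¹) :=
      (summable_mul_left_iff (by positivity : (α*L) ≠ 0)).mp hsummg'
    have hsummf : Summable (fun n : ℕ => ((n:ℝ))⁻¹) := by
      rw [← summable_nat_add_iff 1]
      exact hsummg''.congr (fun k => by push_cast; ring)
    exact Real.not_summable_natCast_inv hsummf
  rw [hL0, sub_zero] at hhas
  exact hhas.tsum_eq
end
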